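/- If a normalized basis of a real Banach space is K-quasi-greedy and D-w-democratic, then it is w-almost greedy with constant at most 8K⁴D + K + 1. -/

import Mathlib

open Finset Filter

section Defs

variable {X : Type*} [NormedAddCommGroup X] [NormedSpace ℝ X]

/-- `wsum w A` is the `w`-measure of the finite set `A`. -/
def wsum (w : ℕ → ℝ) (A : Finset ℕ) : ℝ := ∑ i ∈ A, w i

/-- `e` is a normalized (Schauder) basis with biorthogonal functionals `E`. -/
def NormalizedBasis (e : ℕ → X) (E : ℕ → X →L[ℝ] ℝ) : Prop :=
  (∀ n, ‖e n‖ = 1) ∧ (∀ n m, E n (e m) = if n = m then (1:ℝ) else 0) ∧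
  ∀ x : X, Filter.Tendsto (fun N => ∑ n ∈ Finset.range N, E n x • e n)
    Filter.atTop (nhds x)

/-- `Λ` is a greedy set for `x`: every coefficient inside dominates every one outside. -/
def GreedySet (E : ℕ → X →L[ℝ] ℝ) (x : X) (Λ : Finset ℕ) : Prop :=
  ∀ n ∈ Λ, ∀ k, k ∉ Λ → |E k x| ≤ |E n x|

/-- quasi-greedy with constant `K`. -/
def QuasiGreedy (e : ℕ → X) (E : ℕ → X →L[ℝ] ℝ) (K : ℝ) : Prop :=
  ∀ (x : X) (Λ : Finset ℕ), GreedySet E x Λ → ‖∑ n ∈ Λ, E n x • e n‖ ≤ K * ‖x‖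

/-- `w`-almost greedy with constant `K`. -/
def WAlmostGreedy (w : ℕ → ℝ) (e : ℕ → X) (E : ℕ → X →L[ℝ] ℝ) (K : ℝ) : Prop :=
  ∀ (x : X) (Λ : Finset ℕ), GreedySet E x Λ →
    ∀ A : Finset ℕ, wsum w A ≤ wsum w Λ →
      ‖x - ∑ n ∈ Λ, E n x • e n‖ ≤ K * ‖x - ∑ n ∈ A, E n x • e n‖

/-- `w`-democratic with constant `D`. -/
def WDemocratic (w : ℕ → ℝ) (e : ℕ → X) (D : ℝ) : Prop :=
  ∀ A B : Finset ℕ, wsum w A ≤ wsum w B →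
    ‖∑ n ∈ A, e n‖ ≤ D * ‖∑ n ∈ B, e n‖

/-- best `m`-term (weighted) approximation error. -/
noncomputable def sigmaW (w : ℕ → ℝ) (e : ℕ → X) (u : ℝ) (x : X) : ℝ :=
  sInf {r | ∃ (A : Finset ℕ) (c : ℕ → ℝ), wsum w A ≤ u ∧ r = ‖x - ∑ n ∈ A, c n • e n‖}

/-- expansional best (weighted) approximation error. -/
noncomputable def sigmaTildeW (w : ℕ → ℝ) (e : ℕ → X) (E : ℕ → X →L[ℝ] ℝ)
    (u : ℝ) (x : X) : ℝ :=
  sInf {r | ∃ A : Finset ℕ, wsum w A ≤ u ∧ r = ‖x - ∑ n ∈ A, E n x • e n‖}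

/-- weighted fundamental function `φ^w`. -/
noncomputable def phiW (w : ℕ → ℝ) (e : ℕ → X) (u : ℝ) : ℝ :=
  sSup {r | ∃ A : Finset ℕ, wsum w A ≤ u ∧ r = ‖∑ n ∈ A, e n‖}

/-- the companion function `φ̂^w`. -/
noncomputable def phiHatW (w : ℕ → ℝ) (e : ℕ → X) (v : ℝ) : ℝ :=
  sInf {r | ∃ A : Finset ℕ, v < wsum w A ∧ r = ‖∑ n ∈ A, e n‖}

/-- `w`-semi-greedy with constant `K`: some Chebyshev approximant on each greedy set
realizes the bound. -/
def WSemiGreedy (w : ℕ → ℝ) (e : ℕ → X) (E : ℕ → X →L[ℝ] ℝ) (K : ℝ) : Prop :=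
  ∀ (x : X) (Λ : Finset ℕ), GreedySet E x Λ →
    ∃ c : ℕ → ℝ, ‖x - ∑ n ∈ Λ, c n • e n‖ ≤ K * sigmaW w e (wsum w Λ) x

/-- a sequence of signs. -/
def SignVec (ε : ℕ → ℝ) : Prop := ∀ n, ε n = 1 ∨ ε n = -1

/-- `w`-superdemocratic with constant `D`. -/
def WSuperDemocratic (w : ℕ → ℝ) (e : ℕ → X) (D : ℝ) : Prop :=
  ∀ A B : Finset ℕ, wsum w A ≤ wsum w B → ∀ ε δ : ℕ → ℝ, SignVec ε → SignVec δ →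
    ‖∑ n ∈ A, ε n • e n‖ ≤ D * ‖∑ n ∈ B, δ n • e n‖

/-- `β` bounds the partial-sum projections (basis constant bound). -/
def BasisConstBound (e : ℕ → X) (E : ℕ → X →L[ℝ] ℝ) (β : ℝ) : Prop :=
  ∀ (x : X) (N : ℕ), ‖∑ n ∈ Finset.range N, E n x • e n‖ ≤ β * ‖x‖

/-- equivalence to the unit vector basis of `c₀`. -/
def EquivC0 (e : ℕ → X) : Prop :=
  ∃ c C : ℝ, 0 < c ∧ ∀ (A : Finset ℕ) (a : ℕ → ℝ),
    (∀ n ∈ A, c * |a n| ≤ ‖∑ m ∈ A, a m • e m‖) ∧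
    (∀ M : ℝ, (∀ n ∈ A, |a n| ≤ M) → ‖∑ n ∈ A, a n • e n‖ ≤ C * M)

/-- conservative with constant `C`. -/
def Conservative (e : ℕ → X) (C : ℝ) : Prop :=
  ∀ A B : Finset ℕ, A.card ≤ B.card → (∀ a ∈ A, ∀ b ∈ B, a < b) →
    ‖∑ n ∈ A, e n‖ ≤ C * ‖∑ n ∈ B, e n‖

/-- `X` has finite cotype. -/
def FiniteCotype (X : Type*) [NormedAddCommGroup X] [NormedSpace ℝ X] : Prop :=
  ∃ (q C : ℝ), 2 ≤ q ∧ 0 < C ∧ ∀ (n : ℕ) (x : Fin n → X),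
    (∑ j, ‖x j‖ ^ q) ^ (1/q) ≤
      C * ((∑ ε : Fin n → Bool,
        ‖∑ j, (if ε j then (1:ℝ) else -1) • x j‖ ^ q) / 2 ^ n) ^ (1/q)

end Defs

/-!
Write `x - P_Λ x = y - P_{Λ \ A} x + P_{A \ Λ} x` with `y = x - P_A x`. The middle term is a
greedy projection of `y`. The coefficients on `A \ Λ` lie below a threshold `t` that minorizes
those on `Λ \ A`, so by democracy and Abel summation the last term is at most `2 t D ‖𝟙_{Λ \ A}‖`;
and `t ‖𝟙_{Λ \ A}‖ ≤ 2K(1 + K) ‖P_{Λ \ A} x‖`, by quasi-greediness applied first to the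
small-coefficient truncations of `P_{Λ \ A} x`, then to the sign vector of its coefficients.
-/

theorem sub_sum_eq_sub_sum_sdiff_add_sum_sdiff {G : Type*} [AddCommGroup G] (f : ℕ → G) (x : G)
    (A Λ : Finset ℕ) :
    x - ∑ n ∈ Λ, f n = x - ∑ n ∈ A, f n - ∑ n ∈ Λ \ A, f n + ∑ n ∈ A \ Λ, f n := by
  rw [sub_add, Finset.sum_sdiff_sub_sum_sdiff]
  abel

section Layers

variable {X : Type*} [NormedAddCommGroup X] [NormedSpace ℝ X]

/-- By Abel summation, `∑ b n • v n` is a combination with nonnegative coefficients of total mass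
at most `c` of the sums of `v` over upper level sets of `b`. -/
theorem norm_sum_smul_le_of_norm_sum_levelSet_le (v : ℕ → X) (M : ℝ) (B : Finset ℕ) (b : ℕ → ℝ)
    {c : ℝ} (hc : 0 ≤ c) (hb : ∀ n ∈ B, 0 ≤ b n ∧ b n ≤ c)
    (hlev : ∀ s > 0, ‖∑ n ∈ B with s ≤ b n, v n‖ ≤ M) :
    ‖∑ n ∈ B, b n • v n‖ ≤ c * M := by
  induction B using Finset.strongInduction generalizing b c with
  | H B ih =>
    rcases B.eq_empty_or_nonempty with rfl | hne
    · simpa using mul_nonneg hc (by simpa using hlev 1 one_pos)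
    obtain ⟨n₀, hn₀, hmin⟩ := B.exists_min_image b hne
    set m := b n₀
    set B' := B.filter (fun n => m < b n)
    have hB' : B' ⊂ B := Finset.filter_ssubset.2 ⟨n₀, hn₀, lt_irrefl m⟩
    have hsplit : ∑ n ∈ B, b n • v n = m • ∑ n ∈ B, v n + ∑ n ∈ B', (b n - m) • v n := by
      rw [Finset.sum_filter_of_ne fun n hn h => (hmin n hn).lt_of_ne fun h' => h (by simp [h']),
        Finset.smul_sum, ← Finset.sum_add_distrib]
      exact Finset.sum_congr rfl fun n _ => by rw [← add_smul, add_sub_cancel]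
    have hbottom : ‖m • ∑ n ∈ B, v n‖ ≤ m * M := by
      rcases (hb n₀ hn₀).1.eq_or_lt with h | h
      · simp [m, ← h]
      · have := hlev m h
        rw [Finset.filter_true_of_mem hmin] at this
        rw [norm_smul, Real.norm_of_nonneg h.le]
        exact mul_le_mul_of_nonneg_left this h.le
    have htop : ‖∑ n ∈ B', (b n - m) • v n‖ ≤ (c - m) * M := by
      refine ih B' hB' _ (by linarith [(hb n₀ hn₀).2]) (fun n hn => ?_) (fun s hs => ?_)
      · obtain ⟨hnB, hn⟩ := Finset.mem_filter.1 hn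
        exact ⟨by linarith, by linarith [(hb n hnB).2]⟩
      · have hlevel : B'.filter (fun n => s ≤ b n - m) = B.filter (fun n => s + m ≤ b n) := by
          ext n
          simp only [B', Finset.mem_filter]
          constructor
          · rintro ⟨⟨hn, -⟩, hs'⟩
            exact ⟨hn, by linarith⟩
          · rintro ⟨hn, hs'⟩
            exact ⟨⟨hn, by linarith⟩, by linarith⟩
        rw [hlevel]
        exact hlev (s + m) (by linarith [(hb n₀ hn₀).1])
    calc ‖∑ n ∈ B, b n • v n‖ ≤ m * M + (c - m) * M := by
          rw [hsplit]
          exact (norm_add_le _ _).trans (add_le_add hbottom htop)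
      _ = c * M := by ring

theorem norm_sum_smul_le_of_forall_subset (v : ℕ → X) {Γ : Finset ℕ} {a : ℕ → ℝ} {t M : ℝ}
    (ht : 0 ≤ t) (ha : ∀ n ∈ Γ, |a n| ≤ t) (hM : ∀ S ⊆ Γ, ‖∑ n ∈ S, v n‖ ≤ M) :
    ‖∑ n ∈ Γ, a n • v n‖ ≤ 2 * t * M := by
  set P := Γ.filter (fun n => 0 ≤ a n)
  set N := Γ.filter (fun n => ¬0 ≤ a n)
  have hlev (T : Finset ℕ) (hT : T ⊆ Γ) (b : ℕ → ℝ) (s : ℝ) :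
      ‖∑ n ∈ T with s ≤ b n, v n‖ ≤ M :=
    hM _ ((Finset.filter_subset _ _).trans hT)
  have hP : ‖∑ n ∈ P, a n • v n‖ ≤ t * M := by
    refine norm_sum_smul_le_of_norm_sum_levelSet_le v M P a ht (fun n hn => ?_)
      fun s _ => hlev P (Finset.filter_subset _ _) a s
    obtain ⟨hnΓ, hn⟩ := Finset.mem_filter.1 hn
    exact ⟨hn, (le_abs_self _).trans (ha n hnΓ)⟩
  have hN : ‖∑ n ∈ N, (-a n) • v n‖ ≤ t * M := by
    refine norm_sum_smul_le_of_norm_sum_levelSet_le v M N (fun n => -a n) ht (fun n hn => ?_)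
      fun s _ => hlev N (Finset.filter_subset _ _) _ s
    obtain ⟨hnΓ, hn⟩ := Finset.mem_filter.1 hn
    exact ⟨by linarith, (neg_le_abs _).trans (ha n hnΓ)⟩
  have hsplit : ∑ n ∈ Γ, a n • v n = ∑ n ∈ P, a n • v n - ∑ n ∈ N, (-a n) • v n := by
    simp only [neg_smul, Finset.sum_neg_distrib, sub_neg_eq_add, P, N]
    exact (Finset.sum_filter_add_sum_filter_not Γ _ _).symm
  calc ‖∑ n ∈ Γ, a n • v n‖ ≤ t * M + t * M := by
        rw [hsplit]
        exact (norm_sub_le _ _).trans (add_le_add hP hN)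
    _ = 2 * t * M := by ring

end Layers

theorem wsum_mono {w : ℕ → ℝ} (hw : ∀ i, 0 ≤ w i) {S T : Finset ℕ} (hST : S ⊆ T) :
    wsum w S ≤ wsum w T :=
  Finset.sum_le_sum_of_subset_of_nonneg hST fun i _ _ => hw i

theorem wsum_sdiff_le_wsum_sdiff {w : ℕ → ℝ} {A Λ : Finset ℕ} (h : wsum w A ≤ wsum w Λ) :
    wsum w (A \ Λ) ≤ wsum w (Λ \ A) := by
  have := Finset.sum_sdiff_sub_sum_sdiff (s₁ := Λ) (s₂ := A) (f := w)
  unfold wsum at h ⊢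
  linarith

theorem exists_nonneg_separating (f : ℕ → ℝ) (hf : ∀ n, 0 ≤ f n) {B Γ : Finset ℕ}
    (h : ∀ n ∈ B, ∀ k ∈ Γ, f k ≤ f n) :
    ∃ t, 0 ≤ t ∧ (∀ k ∈ Γ, f k ≤ t) ∧ ∀ n ∈ B, t ≤ f n := by
  rcases B.eq_empty_or_nonempty with rfl | hB
  · exact ⟨∑ k ∈ Γ, f k, Finset.sum_nonneg fun k _ => hf k,
      fun k hk => Finset.single_le_sum (fun i _ => hf i) hk, by simp⟩
  obtain ⟨n₀, hn₀, hmin⟩ := B.exists_min_image f hB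
  exact ⟨f n₀, hf n₀, h n₀ hn₀, hmin⟩

theorem WDemocratic.one_le {X : Type*} [NormedAddCommGroup X] {e : ℕ → X} {w : ℕ → ℝ} {D : ℝ}
    (hD : WDemocratic w e D) {n : ℕ} (hn : e n ≠ 0) : 1 ≤ D := by
  have := hD {n} {n} le_rfl
  rw [Finset.sum_singleton] at this
  exact le_of_mul_le_mul_right (by simpa using this) (norm_pos_iff.2 hn)

section Basis

variable {X : Type*} [NormedAddCommGroup X] [NormedSpace ℝ X] {e : ℕ → X} {E : ℕ → X →L[ℝ] ℝ}

def Biorthogonal (e : ℕ → X) (E : ℕ → X →L[ℝ] ℝ) : Prop :=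
  ∀ n m, E n (e m) = if n = m then (1 : ℝ) else 0

theorem apply_sum_smul (hbi : Biorthogonal e E) (S : Finset ℕ) (c : ℕ → ℝ) (k : ℕ) :
    E k (∑ n ∈ S, c n • e n) = if k ∈ S then c k else 0 := by
  simp [map_sum, hbi k]

theorem apply_sub_sum_smul_apply (hbi : Biorthogonal e E) (x : X) (A : Finset ℕ) (k : ℕ) :
    E k (x - ∑ n ∈ A, E n x • e n) = if k ∈ A then 0 else E k x := by
  rw [map_sub, apply_sum_smul hbi]
  split_ifs <;> simp

theorem GreedySet.sdiff (hbi : Biorthogonal e E) {x : X} {Λ : Finset ℕ} (hΛ : GreedySet E x Λ)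
    (A : Finset ℕ) :
    GreedySet E (x - ∑ n ∈ A, E n x • e n) (Λ \ A) := by
  intro n hn k hk
  obtain ⟨hnΛ, hnA⟩ := Finset.mem_sdiff.1 hn
  rw [apply_sub_sum_smul_apply hbi, apply_sub_sum_smul_apply hbi, if_neg hnA]
  split_ifs with hkA
  · simp
  · exact hΛ n hnΛ k fun hkΛ => hk (Finset.mem_sdiff.2 ⟨hkΛ, hkA⟩)

theorem greedySet_filter_lt_abs (hbi : Biorthogonal e E) (B : Finset ℕ) (a : ℕ → ℝ) (τ : ℝ) :
    GreedySet E (∑ n ∈ B, a n • e n) (B.filter fun n => τ < |a n|) := by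
  intro n hn k hk
  obtain ⟨hnB, hτn⟩ := Finset.mem_filter.1 hn
  rw [apply_sum_smul hbi, apply_sum_smul hbi, if_pos hnB]
  split_ifs with hkB
  · exact (le_of_not_gt fun h => hk (Finset.mem_filter.2 ⟨hkB, h⟩)).trans hτn.le
  · simp

theorem greedySet_of_subset_of_abs_eq_one (hbi : Biorthogonal e E) {B S : Finset ℕ} {ε : ℕ → ℝ}
    (hε : ∀ n ∈ B, |ε n| = 1) (hS : S ⊆ B) :
    GreedySet E (∑ n ∈ B, ε n • e n) S := by
  intro n hn k _
  rw [apply_sum_smul hbi, apply_sum_smul hbi, if_pos (hS hn), hε n (hS hn)]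
  split_ifs with hkB
  · exact (hε k hkB).le
  · simp

theorem QuasiGreedy.one_le {K : ℝ} (hK : QuasiGreedy e E K)
    (hbi : Biorthogonal e E) {n : ℕ} (hn : e n ≠ 0) : 1 ≤ K := by
  have hgreedy : GreedySet E (e n) {n} := by
    intro i hi k hk
    rw [Finset.mem_singleton] at hi hk
    simp [hbi k n, hbi n n, hi, hk]
  have := hK (e n) {n} hgreedy
  rw [Finset.sum_singleton, hbi, if_pos rfl, one_smul] at this
  exact le_of_mul_le_mul_right (by simpa using this) (norm_pos_iff.2 hn)

theorem QuasiGreedy.norm_sum_sdiff_le {K : ℝ} (hK : QuasiGreedy e E K)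
    (hbi : Biorthogonal e E) {x : X} {Λ : Finset ℕ} (hΛ : GreedySet E x Λ) (A : Finset ℕ) :
    ‖∑ n ∈ Λ \ A, E n x • e n‖ ≤ K * ‖x - ∑ n ∈ A, E n x • e n‖ := by
  have := hK _ _ (hΛ.sdiff hbi A)
  rwa [Finset.sum_congr rfl fun n hn => by
    rw [apply_sub_sum_smul_apply hbi, if_neg (Finset.mem_sdiff.1 hn).2]] at this

theorem QuasiGreedy.norm_sum_filter_abs_le {K : ℝ} (hK : QuasiGreedy e E K)
    (hbi : Biorthogonal e E) (B : Finset ℕ) (a : ℕ → ℝ) (τ : ℝ) :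
    ‖∑ n ∈ B with |a n| ≤ τ, a n • e n‖ ≤ (1 + K) * ‖∑ n ∈ B, a n • e n‖ := by
  set z := ∑ n ∈ B, a n • e n
  have hgreedy := hK z _ (greedySet_filter_lt_abs hbi B a τ)
  have hcoeff : ∑ n ∈ B with τ < |a n|, E n z • e n = ∑ n ∈ B with τ < |a n|, a n • e n :=
    Finset.sum_congr rfl fun n hn => by
      rw [apply_sum_smul hbi, if_pos (Finset.mem_filter.1 hn).1]
  have hsplit : ∑ n ∈ B with |a n| ≤ τ, a n • e n = z - ∑ n ∈ B with τ < |a n|, a n • e n := by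
    rw [eq_sub_iff_add_eq, add_comm]
    simpa only [not_lt] using Finset.sum_filter_add_sum_filter_not B (fun n => τ < |a n|) _
  rw [hsplit]
  calc ‖z - ∑ n ∈ B with τ < |a n|, a n • e n‖ ≤ ‖z‖ + K * ‖z‖ :=
        (norm_sub_le _ _).trans (add_le_add_right (hcoeff ▸ hgreedy) _)
    _ = (1 + K) * ‖z‖ := by ring

/-- The signs are recovered from `a n • e n` by the weights `|a n|⁻¹ ≤ t⁻¹`, whose upper level
sets are the sets `{n | |a n| ≤ s⁻¹}`. -/
theorem QuasiGreedy.mul_norm_sum_sign_smul_le {K : ℝ} (hK : QuasiGreedy e E K)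
    (hbi : Biorthogonal e E) {B : Finset ℕ} {a : ℕ → ℝ} {t : ℝ}
    (ht : 0 < t) (hta : ∀ n ∈ B, t ≤ |a n|) :
    t * ‖∑ n ∈ B, (SignType.sign (a n) : ℝ) • e n‖ ≤ (1 + K) * ‖∑ n ∈ B, a n • e n‖ := by
  have hpos (n : ℕ) (hn : n ∈ B) : 0 < |a n| := ht.trans_le (hta n hn)
  have hweights (n : ℕ) (hn : n ∈ B) : 0 ≤ |a n|⁻¹ ∧ |a n|⁻¹ ≤ t⁻¹ :=
    ⟨inv_nonneg.2 (abs_nonneg _), inv_anti₀ ht (hta n hn)⟩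
  have hlev (s : ℝ) (hs : 0 < s) :
      ‖∑ n ∈ B with s ≤ |a n|⁻¹, a n • e n‖ ≤ (1 + K) * ‖∑ n ∈ B, a n • e n‖ := by
    rw [Finset.filter_congr fun n hn => le_inv_comm₀ hs (hpos n hn)]
    exact hK.norm_sum_filter_abs_le hbi B a s⁻¹
  have hsign : ∑ n ∈ B, |a n|⁻¹ • a n • e n = ∑ n ∈ B, (SignType.sign (a n) : ℝ) • e n :=
    Finset.sum_congr rfl fun n hn => by
      rw [smul_smul]
      congr 1
      rw [inv_mul_eq_iff_eq_mul₀ (hpos n hn).ne', abs_mul_sign]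
  have := norm_sum_smul_le_of_norm_sum_levelSet_le _ _ B _ (inv_nonneg.2 ht.le) hweights hlev
  rw [hsign] at this
  calc t * ‖∑ n ∈ B, (SignType.sign (a n) : ℝ) • e n‖
      ≤ t * (t⁻¹ * ((1 + K) * ‖∑ n ∈ B, a n • e n‖)) := mul_le_mul_of_nonneg_left this ht.le
    _ = (1 + K) * ‖∑ n ∈ B, a n • e n‖ := by field_simp

theorem QuasiGreedy.norm_sum_le_of_abs_eq_one {K : ℝ} (hK : QuasiGreedy e E K)
    (hbi : Biorthogonal e E) {B : Finset ℕ} {ε : ℕ → ℝ} (hε : ∀ n ∈ B, |ε n| = 1) :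
    ‖∑ n ∈ B, e n‖ ≤ 2 * K * ‖∑ n ∈ B, ε n • e n‖ := by
  set z := ∑ n ∈ B, ε n • e n
  have hP := hK z _ (greedySet_of_subset_of_abs_eq_one hbi hε (Finset.filter_subset (0 < ε ·) B))
  have hN := hK z _ (greedySet_of_subset_of_abs_eq_one hbi hε
    (Finset.filter_subset (fun n => ¬0 < ε n) B))
  have hcoeff (n : ℕ) (hn : n ∈ B) : E n z = if 0 < ε n then 1 else -1 := by
    rw [apply_sum_smul hbi, if_pos hn]
    rcases abs_eq (zero_le_one' ℝ) |>.1 (hε n hn) with h | h <;> simp [h]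
  rw [Finset.sum_congr rfl fun n hn => by
    rw [hcoeff n (Finset.mem_filter.1 hn).1, if_pos (Finset.mem_filter.1 hn).2, one_smul]] at hP
  rw [Finset.sum_congr rfl fun n hn => by
    rw [hcoeff n (Finset.mem_filter.1 hn).1, if_neg (Finset.mem_filter.1 hn).2, neg_one_smul],
    Finset.sum_neg_distrib, norm_neg] at hN
  rw [← Finset.sum_filter_add_sum_filter_not B (0 < ε ·)]
  linarith [norm_add_le (∑ n ∈ B with 0 < ε n, e n) (∑ n ∈ B with ¬0 < ε n, e n)]

theorem QuasiGreedy.mul_norm_sum_le {K : ℝ} (hK : QuasiGreedy e E K)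
    (hbi : Biorthogonal e E) (hK0 : 0 ≤ K) {B : Finset ℕ} {a : ℕ → ℝ} {t : ℝ}
    (hta : ∀ n ∈ B, t ≤ |a n|) :
    t * ‖∑ n ∈ B, e n‖ ≤ 2 * K * (1 + K) * ‖∑ n ∈ B, a n • e n‖ := by
  rcases le_or_gt t 0 with ht | ht
  · exact (mul_nonpos_of_nonpos_of_nonneg ht (norm_nonneg _)).trans (by positivity)
  have hsign : ∀ n ∈ B, |(SignType.sign (a n) : ℝ)| = 1 := fun n hn => by
    rcases (abs_pos.1 (ht.trans_le (hta n hn))).lt_or_gt with h | h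
    · simp [sign_neg h]
    · simp [sign_pos h]
  calc t * ‖∑ n ∈ B, e n‖
      ≤ t * (2 * K * ‖∑ n ∈ B, (SignType.sign (a n) : ℝ) • e n‖) :=
        mul_le_mul_of_nonneg_left (hK.norm_sum_le_of_abs_eq_one hbi hsign) ht.le
    _ = 2 * K * (t * ‖∑ n ∈ B, (SignType.sign (a n) : ℝ) • e n‖) := by ring
    _ ≤ 2 * K * ((1 + K) * ‖∑ n ∈ B, a n • e n‖) :=
        mul_le_mul_of_nonneg_left (hK.mul_norm_sum_sign_smul_le hbi ht hta) (by positivity)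
    _ = 2 * K * (1 + K) * ‖∑ n ∈ B, a n • e n‖ := by ring

theorem WDemocratic.norm_sum_smul_le {w : ℕ → ℝ} {D : ℝ} (hD : WDemocratic w e D)
    (hw : ∀ i, 0 ≤ w i) {B Γ : Finset ℕ} (hΓB : wsum w Γ ≤ wsum w B) {a : ℕ → ℝ} {t : ℝ}
    (ht : 0 ≤ t) (ha : ∀ n ∈ Γ, |a n| ≤ t) :
    ‖∑ n ∈ Γ, a n • e n‖ ≤ 2 * t * (D * ‖∑ n ∈ B, e n‖) :=
  norm_sum_smul_le_of_forall_subset e ht ha fun _ hS => hD _ _ ((wsum_mono hw hS).trans hΓB)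

end Basis

theorem stmt2_general {X : Type*} [NormedAddCommGroup X] [NormedSpace ℝ X]
    (e : ℕ → X) (E : ℕ → X →L[ℝ] ℝ) (w : ℕ → ℝ) (K D : ℝ)
    (hw : ∀ i, 0 < w i) (hb : NormalizedBasis e E)
    (hK : QuasiGreedy e E K) (hD : WDemocratic w e D) :
    WAlmostGreedy w e E (8 * K ^ 4 * D + K + 1) := by
  intro x Λ hΛ A hA
  obtain ⟨hnorm, hbi, -⟩ := hb
  have he : e 0 ≠ 0 := norm_ne_zero_iff.1 (by simp [hnorm 0])
  have hK1 := hK.one_le hbi he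
  have hD1 := hD.one_le he
  have hK0 : 0 ≤ K := by linarith
  have hD0 : 0 ≤ D := by linarith
  obtain ⟨t, ht0, htΓ, htB⟩ := exists_nonneg_separating (fun n => |E n x|)
    (fun n => abs_nonneg _) fun n hn k hk =>
      hΛ n (Finset.mem_sdiff.1 hn).1 k (Finset.mem_sdiff.1 hk).2
  have hPΛA := hK.norm_sum_sdiff_le hbi hΛ A
  have h1B := hK.mul_norm_sum_le hbi hK0 htB
  have hPAΛ := hD.norm_sum_smul_le (fun i => (hw i).le) (wsum_sdiff_le_wsum_sdiff hA) ht0 htΓ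
  rw [sub_sum_eq_sub_sum_sdiff_add_sum_sdiff _ x A Λ]
  set y := x - ∑ n ∈ A, E n x • e n
  set PΛA := ∑ n ∈ Λ \ A, E n x • e n
  set PAΛ := ∑ n ∈ A \ Λ, E n x • e n
  have hK2 : K ^ 2 * (1 + K) ≤ 2 * K ^ 4 := by
    nlinarith [mul_nonneg (sq_nonneg K)
      (mul_nonneg (by linarith : 0 ≤ 2 * K + 1) (sub_nonneg.2 hK1))]
  calc ‖y - PΛA + PAΛ‖ ≤ ‖y‖ + ‖PΛA‖ + ‖PAΛ‖ := by
        linarith [norm_add_le (y - PΛA) PAΛ, norm_sub_le y PΛA]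
    _ ≤ ‖y‖ + ‖PΛA‖ + 2 * D * (2 * K * (1 + K) * ‖PΛA‖) := by
        linarith [mul_le_mul_of_nonneg_left h1B hD0]
    _ ≤ ‖y‖ + K * ‖y‖ + 2 * D * (2 * K * (1 + K) * (K * ‖y‖)) := by
        gcongr
    _ ≤ (8 * K ^ 4 * D + K + 1) * ‖y‖ := by
        nlinarith [mul_le_mul_of_nonneg_right hK2 (mul_nonneg hD0 (norm_nonneg y))]

/-- a `K`-quasi-greedy, `D`-`w`-democratic normalized basis of a real Banach
space is `w`-almost greedy with constant at most `8K⁴D + K + 1`. -/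
theorem stmt2 {X : Type*} [NormedAddCommGroup X] [NormedSpace ℝ X] [CompleteSpace X]
    (e : ℕ → X) (E : ℕ → X →L[ℝ] ℝ) (w : ℕ → ℝ) (K D : ℝ)
    (hw : ∀ i, 0 < w i) (hb : NormalizedBasis e E)
    (hK : QuasiGreedy e E K) (hD : WDemocratic w e D) :
    WAlmostGreedy w e E (8 * K ^ 4 * D + K + 1) :=
  stmt2_general e E w K D hw hb hK hD
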